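/- arXiv:1703.02527 — 3 statements merged into one kernel-verified Lean document; each statement's English description precedes it below -/
import Mathlib

section
/- The lower bound in the KL scaling lemma: for any c, p, q in [0,1] with max{p,q} < 1 and 0 < q, c·(1 - max{p,q})·KL(p‖q) ≤ KL(c·p‖c·q), where KL is the Bernoulli Kullback-Leibler divergence. -/
/-- Bernoulli Kullback-Leibler divergence. -/
noncomputable def klBer (p q : ℝ) : ℝ :=
  p * Real.log (p / q) + (1 - p) * Real.log ((1 - p) / (1 - q))

/-!
For `0 ≤ m ≤ 1 - max p q`, the function `F t = KL(c p ‖ c t) - c m KL(p ‖ t)` vanishes at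
`t = p` and has derivative `F' t = c (t - p) / t * (1 / (1 - c t) - m / (1 - t))`.
On the segment between `p` and `q` we have `m ≤ 1 - t ≤ (1 - t) / (1 - c t)`, so `F'` has the
sign of `t - p`: `F` is minimal at `p`, whence `F q ≥ 0`.
-/

open Real Set

theorem le_of_sub_mul_deriv_nonneg {f f' : ℝ → ℝ} {a b : ℝ} (hf : ContinuousOn f (uIcc a b))
    (hf' : ∀ t ∈ Ioo (min a b) (max a b), HasDerivAt f (f' t) t)
    (hsign : ∀ t ∈ Ioo (min a b) (max a b), 0 ≤ (t - a) * f' t) : f a ≤ f b := by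
  rcases le_total a b with hab | hba
  · rw [uIcc_of_le hab] at hf
    rw [min_eq_left hab, max_eq_right hab] at hf' hsign
    refine monotoneOn_of_hasDerivWithinAt_nonneg (f' := f') (convex_Icc a b) hf
      (fun t ht => ?_) (fun t ht => ?_) (left_mem_Icc.2 hab) (right_mem_Icc.2 hab) hab
    all_goals rw [interior_Icc] at ht
    · exact (hf' t ht).hasDerivWithinAt
    · exact nonneg_of_mul_nonneg_right (hsign t ht) (sub_pos.2 ht.1)
  · rw [uIcc_of_ge hba] at hf
    rw [min_eq_right hba, max_eq_left hba] at hf' hsign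
    refine antitoneOn_of_hasDerivWithinAt_nonpos (f' := f') (convex_Icc b a) hf
      (fun t ht => ?_) (fun t ht => ?_) (left_mem_Icc.2 hba) (right_mem_Icc.2 hba) hba
    all_goals rw [interior_Icc] at ht
    · exact (hf' t ht).hasDerivWithinAt
    · exact nonpos_of_mul_nonneg_right (hsign t ht) (sub_neg.2 ht.2)

lemma klBer_self (x : ℝ) : klBer x x = 0 := by
  rcases eq_or_ne x 0 with rfl | h0
  · simp [klBer]
  rcases eq_or_ne x 1 with rfl | h1
  · simp [klBer]
  · simp [klBer, div_self h0, div_self (sub_ne_zero.2 (Ne.symm h1))]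

lemma klBer_zero_left (s : ℝ) : klBer 0 s = -log (1 - s) := by
  simp [klBer, log_inv]

lemma mul_log_div (a : ℝ) {b : ℝ} (hb : b ≠ 0) : a * log (a / b) = a * log a - a * log b := by
  rcases eq_or_ne a 0 with rfl | ha
  · simp
  · rw [log_div ha hb, mul_sub]

lemma klBer_eq_of_ne (p : ℝ) {s : ℝ} (hs0 : s ≠ 0) (hs1 : s ≠ 1) :
    klBer p s = p * log p + (1 - p) * log (1 - p) - p * log s - (1 - p) * log (1 - s) := by
  rw [klBer, mul_log_div p hs0, mul_log_div (1 - p) (sub_ne_zero.2 (Ne.symm hs1))]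
  ring

lemma hasDerivAt_klBer (p : ℝ) {t : ℝ} (ht0 : 0 < t) (ht1 : t < 1) :
    HasDerivAt (klBer p) ((t - p) / (t * (1 - t))) t := by
  have h1t : 1 - t ≠ 0 := sub_ne_zero.2 ht1.ne'
  have hlog := (((hasDerivAt_log ht0.ne').const_mul p).const_sub
      (p * log p + (1 - p) * log (1 - p))).sub
      ((((hasDerivAt_id t).const_sub 1).log h1t).const_mul (1 - p))
  refine (hlog.congr_of_eventuallyEq ?_).congr_deriv ?_
  · filter_upwards [Ioo_mem_nhds ht0 ht1] with s hs using klBer_eq_of_ne p hs.1.ne' hs.2.ne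
  · simp only [id]
    field_simp
    ring

lemma continuousOn_klBer_uIcc {p q : ℝ} (hp : 0 ≤ p) (hq : 0 < q) (hp1 : p < 1) (hq1 : q < 1) :
    ContinuousOn (klBer p) (uIcc p q) := by
  intro t ht
  rw [mem_uIcc] at ht
  have ht1 : t < 1 := by rcases ht with ht | ht <;> linarith
  refine ContinuousAt.continuousWithinAt ?_
  rcases (show 0 ≤ t by rcases ht with ht | ht <;> linarith).eq_or_lt with rfl | ht0
  · obtain rfl : p = 0 := by rcases ht with ht | ht <;> linarith
    simp only [funext klBer_zero_left]
    exact ((continuousAt_const.sub continuousAt_id).log (sub_ne_zero.2 ht1.ne')).neg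
  · exact (hasDerivAt_klBer p ht0 ht1).continuousAt

lemma hasDerivAt_klBer_mul (c p : ℝ) {t : ℝ} (hct0 : 0 < c * t) (hct1 : c * t < 1) :
    HasDerivAt (fun s => klBer (c * p) (c * s)) (c * (t - p) / (t * (1 - c * t))) t := by
  refine ((hasDerivAt_klBer (c * p) hct0 hct1).comp t
    ((hasDerivAt_id t).const_mul c)).congr_deriv ?_
  have hc : c ≠ 0 := left_ne_zero_of_mul hct0.ne'
  have ht : t ≠ 0 := right_ne_zero_of_mul hct0.ne'
  have h1 : 1 - c * t ≠ 0 := sub_ne_zero.2 hct1.ne'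
  field_simp

lemma sub_mul_deriv_klBer_scaling_nonneg {c m p t : ℝ} (hc0 : 0 ≤ c) (hc1 : c ≤ 1)
    (ht0 : 0 < t) (ht1 : t < 1) (hm0 : 0 ≤ m) (hmt : m ≤ 1 - t) :
    0 ≤ (t - p) * (c * (t - p) / (t * (1 - c * t)) - c * m * ((t - p) / (t * (1 - t)))) := by
  have h1t : 0 < 1 - t := sub_pos.2 ht1
  have h1ct : 0 < 1 - c * t := by nlinarith
  have hgap : 0 ≤ (1 - t) - m * (1 - c * t) := by
    nlinarith [mul_nonneg hm0 (mul_nonneg hc0 ht0.le)]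
  have key : (t - p) * (c * (t - p) / (t * (1 - c * t)) - c * m * ((t - p) / (t * (1 - t))))
      = c * (t - p) ^ 2 * ((1 - t) - m * (1 - c * t)) / (t * (1 - c * t) * (1 - t)) := by
    have hu := h1ct.ne'
    generalize 1 - c * t = u at hu ⊢
    field_simp
  rw [key]
  positivity

theorem mul_klBer_le_klBer_mul {c m p q : ℝ} (hc0 : 0 ≤ c) (hc1 : c ≤ 1) (hp0 : 0 ≤ p)
    (hq0 : 0 < q) (hp1 : p < 1) (hq1 : q < 1) (hm0 : 0 ≤ m) (hm : m ≤ 1 - max p q) :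
    c * m * klBer p q ≤ klBer (c * p) (c * q) := by
  rcases hc0.eq_or_lt with rfl | hc
  · simp [klBer_self]
  have hcp1 : c * p < 1 := by nlinarith
  have hcq1 : c * q < 1 := by nlinarith
  have hcont : ContinuousOn (klBer (c * p)) (uIcc (c * p) (c * q)) :=
    continuousOn_klBer_uIcc (by positivity) (by positivity) hcp1 hcq1
  have hF := le_of_sub_mul_deriv_nonneg (a := p) (b := q)
    (f := fun t => klBer (c * p) (c * t) - c * m * klBer p t)
    (f' := fun t => c * (t - p) / (t * (1 - c * t)) - c * m * ((t - p) / (t * (1 - t))))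
    ?cont ?deriv ?sign
  · simpa [klBer_self] using hF
  case cont =>
    refine (hcont.comp (continuousOn_const.mul continuousOn_id) fun t ht => ?_).sub
      ((continuousOn_klBer_uIcc hp0 hq0 hp1 hq1).const_smul (c * m))
    exact image_const_mul_uIcc c p q ▸ mem_image_of_mem _ ht
  all_goals
    intro t ht
    have ht0 : 0 < t := lt_of_le_of_lt (le_min hp0 hq0.le) ht.1
    have ht1 : t < 1 := ht.2.trans (max_lt hp1 hq1)
    have hct0 : 0 < c * t := mul_pos hc ht0
    have hct1 : c * t < 1 := by nlinarith
  case deriv =>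
    exact (hasDerivAt_klBer_mul c p hct0 hct1).sub ((hasDerivAt_klBer p ht0 ht1).const_mul _)
  case sign =>
    exact sub_mul_deriv_klBer_scaling_nonneg hc0 hc1 ht0 ht1 hm0 (by linarith [ht.2])

theorem kl_scaling_lower_general (c p q : ℝ) (hc : c ∈ Set.Icc (0:ℝ) 1) (hp : p ∈ Set.Icc (0:ℝ) 1)
    (hmax : max p q < 1) (hq0 : 0 < q) :
    c * (1 - max p q) * klBer p q ≤ klBer (c * p) (c * q) :=
  mul_klBer_le_klBer_mul hc.1 hc.2 hp.1 hq0 ((le_max_left p q).trans_lt hmax)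
    ((le_max_right p q).trans_lt hmax) (sub_nonneg.2 hmax.le) le_rfl

theorem kl_scaling_lower (c p q : ℝ) (hc : c ∈ Set.Icc (0:ℝ) 1) (hp : p ∈ Set.Icc (0:ℝ) 1)
    (hq : q ∈ Set.Icc (0:ℝ) 1) (hmax : max p q < 1) (hq0 : 0 < q) :
    c * (1 - max p q) * klBer p q ≤ klBer (c * p) (c * q) :=
  kl_scaling_lower_general c p q hc hp hmax hq0
end

section
/- The cascade model satisfies the correct examination scaling assumption: let R = (d₁,…,d_K) be a list with positions i ≤ j such that α(d_i) ≤ α(d_j), and let R' be R with items d_i and d_j exchanged. Then the cascade examination probabilities satisfy χ(R,j) ≥ χ(R',j), where χ(R,k) = ∏_{m=1}^{k-1}(1−α(d_m)). -/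
open Finset

theorem prod_one_sub_comp_update_le {ι D : Type*} [DecidableEq ι] (s : Finset ι) (α : D → ℝ)
    (hα : ∀ e, α e ≤ 1) (d : ι → D) (i : ι) {e : D} (he : α (d i) ≤ α e) :
    ∏ m ∈ s, (1 - α (Function.update d i e m)) ≤ ∏ m ∈ s, (1 - α (d m)) := by
  refine prod_le_prod (fun m _ => sub_nonneg.2 (hα _)) fun m _ => ?_
  rcases eq_or_ne m i with rfl | hmi
  · rw [Function.update_self]
    exact sub_le_sub_left he 1
  · rw [Function.update_of_ne hmi]

theorem cascade_examination_scaling_general {D : Type*} (K : ℕ) (α : D → ℝ)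
    (hα : ∀ e, α e ∈ Set.Icc (0:ℝ) 1) (d : Fin K → D) (i j : Fin K)
    (hatt : α (d i) ≤ α (d j)) :
    ∏ m ∈ univ.filter (fun m => m < j),
        (1 - α (Function.update (Function.update d i (d j)) j (d i) m)) ≤
      ∏ m ∈ univ.filter (fun m => m < j), (1 - α (d m)) := by
  calc ∏ m ∈ univ.filter (fun m => m < j),
          (1 - α (Function.update (Function.update d i (d j)) j (d i) m))
        = ∏ m ∈ univ.filter (fun m => m < j), (1 - α (Function.update d i (d j) m)) :=
          prod_congr rfl fun m hm => by rw [Function.update_of_ne (mem_filter.1 hm).2.ne]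
    _ ≤ _ := prod_one_sub_comp_update_le _ α (fun e => (hα e).2) d i hatt

/-- The cascade model satisfies the correct examination scaling assumption: swapping a
less attractive item at position `i` with a more attractive item at position `j ≥ i`
cannot increase the examination probability of position `j`. -/
theorem cascade_examination_scaling {D : Type*} [DecidableEq D] (K : ℕ) (α : D → ℝ)
    (hα : ∀ e, α e ∈ Set.Icc (0:ℝ) 1) (d : Fin K → D) (i j : Fin K) (hij : i ≤ j)
    (hatt : α (d i) ≤ α (d j)) :
    ∏ m ∈ univ.filter (fun m => m < j),
        (1 - α (Function.update (Function.update d i (d j)) j (d i) m)) ≤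
      ∏ m ∈ univ.filter (fun m => m < j), (1 - α (d m)) :=
  cascade_examination_scaling_general K α hα d i j hatt
end

section
/- The cascade model satisfies the optimal examination assumption: if α(1) ≥ α(2) ≥ … ≥ α(L) with α(d) ∈ [0,1], then for any list R of K distinct items from [L] and any position k ∈ [K], ∏_{m=1}^{k-1}(1−α(d_m)) ≥ ∏_{m=1}^{k-1}(1−α(m)). -/
/-!
Listed in increasing order, the `i`-th of any `k` distinct items of `[L]` is at least `i`, so
its attraction probability is at most `α i`. Comparing the products `∏ (1 - α)` factor by factor
along this order shows that the optimal list minimizes every examination probability.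
-/

open Finset

lemma Fin.val_le_val_of_strictMono {n m : ℕ} {f : Fin n → Fin m} (hf : StrictMono f)
    (i : Fin n) : (i : ℕ) ≤ f i := by
  obtain ⟨i, hi⟩ := i
  induction i with
  | zero => exact Nat.zero_le _
  | succ i ih => exact (ih (by omega)).trans_lt (hf (Fin.mk_lt_mk.2 i.lt_succ_self))

theorem Finset.prod_castLE_le_prod_of_monotone {R : Type*} [CommSemiring R] [PartialOrder R]
    [IsOrderedRing R] {L n : ℕ} (hn : n ≤ L) {g : Fin L → R} (hg0 : ∀ i, 0 ≤ g i)
    (hg : Monotone g) (s : Finset (Fin L)) (hs : #s = n) :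
    ∏ i : Fin n, g (Fin.castLE hn i) ≤ ∏ x ∈ s, g x :=
  calc ∏ i : Fin n, g (Fin.castLE hn i)
      ≤ ∏ i : Fin n, g (s.orderEmbOfFin hs i) :=
        prod_le_prod (fun _ _ => hg0 _) fun i _ =>
          hg (Fin.val_le_val_of_strictMono (s.orderEmbOfFin hs).strictMono i)
    _ = ∏ x ∈ univ.image (s.orderEmbOfFin hs), g x :=
        (prod_image fun _ _ _ _ h => (s.orderEmbOfFin hs).injective h).symm
    _ = ∏ x ∈ s, g x := by rw [image_orderEmbOfFin_univ]

/-- The cascade model satisfies the optimal examination assumption: any position is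
least examined under the optimal list `(1, …, K)`. -/
theorem cascade_optimal_examination (L K : ℕ) (hKL : K ≤ L) (α : Fin L → ℝ)
    (hα01 : ∀ e, α e ∈ Set.Icc (0:ℝ) 1) (hα : ∀ i j : Fin L, i ≤ j → α j ≤ α i)
    (d : Fin K → Fin L) (hd : Function.Injective d) (k : Fin K) :
    ∏ m ∈ univ.filter (fun m => m < k), (1 - α (Fin.castLE hKL m)) ≤
      ∏ m ∈ univ.filter (fun m => m < k), (1 - α (d m)) := by
  have hk : (k : ℕ) ≤ K := k.is_le'
  have hprefix : univ.filter (· < k) = univ.map (Fin.castLEEmb hk) := by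
    ext m
    simp only [mem_filter, mem_univ, true_and, mem_map, Fin.castLEEmb_apply]
    exact ⟨fun h => ⟨⟨m, h⟩, rfl⟩, by rintro ⟨a, rfl⟩; exact a.is_lt⟩
  have key := prod_castLE_le_prod_of_monotone (hk.trans hKL) (g := fun e => 1 - α e)
    (fun e => sub_nonneg.2 (hα01 e).2) (fun i j hij => sub_le_sub_left (hα i j hij) 1)
    (univ.map ((Fin.castLEEmb hk).trans ⟨d, hd⟩)) (by simp)
  rw [hprefix, prod_map, prod_map]
  simpa [prod_map] using key
end
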